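/- Let p ∈ U. Then C(p) = {p} (i.e., p is a 0-cell of the restricted graphical arrangement) if and only if there exists a nonempty subset I ⊆ [n] such that both induced subgraphs G[I] and G[V∖I] are connected and p = (1/|I|)·e_I. -/

import Mathlib

open Finset

/-- The vertex-induced subgraph on `S` of the multigraph with edge-multiplicity
function `μ` is connected: any two vertices of `S` are joined by a walk inside `S`. -/
def ConnectedOn {n : ℕ} (μ : Fin (n + 1) → Fin (n + 1) → ℕ) (S : Set (Fin (n + 1))) : Prop :=
  ∀ i ∈ S, ∀ j ∈ S, Relation.ReflTransGen (fun a b => a ∈ S ∧ b ∈ S ∧ 1 ≤ μ a b) i j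

/-- The affine subspace `U = { x ∈ ℝ^{n+1} : x_{n+1} = 0, x_1 + ⋯ + x_n = 1 }`. -/
def U (n : ℕ) : Set (Fin (n + 1) → ℝ) :=
  {x | x (Fin.last n) = 0 ∧ ∑ i : Fin n, x i.castSucc = 1}

/-- The open cell of `p` in the restriction of the graphical arrangement of `μ` to `U`. -/
def openCell {n : ℕ} (μ : Fin (n + 1) → Fin (n + 1) → ℕ) (p : Fin (n + 1) → ℝ) :
    Set (Fin (n + 1) → ℝ) :=
  {q | q ∈ U n ∧ ∀ i j, 1 ≤ μ i j →
    ((q i < q j ↔ p i < p j) ∧ (q i = q j ↔ p i = p j))}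

/-- The closed cell of `p` in the restriction of the graphical arrangement of `μ` to `U`. -/
def closedCell {n : ℕ} (μ : Fin (n + 1) → Fin (n + 1) → ℕ) (p : Fin (n + 1) → ℝ) :
    Set (Fin (n + 1) → ℝ) :=
  {q | q ∈ U n ∧ ∀ i j, 1 ≤ μ i j →
    ((p i < p j → q i ≤ q j) ∧ (p i = p j → q i = q j))}

/-- `p`-equivalence: `i ∼_p j` iff there is a path in the graph along which `p` is constant. -/
def pEquiv {n : ℕ} (μ : Fin (n + 1) → Fin (n + 1) → ℕ) (p : Fin (n + 1) → ℝ)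
    (i j : Fin (n + 1)) : Prop :=
  Relation.ReflTransGen (fun a b => 1 ≤ μ a b ∧ p a = p b) i j

/-- `d_I(i)`: the number of edges from vertex `i` to the complement of `I`. -/
def dI {n : ℕ} (μ : Fin (n + 1) → Fin (n + 1) → ℕ) (I : Finset (Fin (n + 1)))
    (i : Fin (n + 1)) : ℕ :=
  ∑ j ∈ Iᶜ, μ i j

/-- `ε_I(i) = d_I(i)` for `i ∈ I` and `0` otherwise. -/
def epsI {n : ℕ} (μ : Fin (n + 1) → Fin (n + 1) → ℕ) (I : Finset (Fin (n + 1)))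
    (i : Fin (n + 1)) : ℕ :=
  if i ∈ I then dI μ I i else 0

/-- The point `(1/|I|) · e_I`, where `e_I` is the 0/1 indicator vector of `I`. -/
noncomputable def qI {n : ℕ} (I : Finset (Fin (n + 1))) : Fin (n + 1) → ℝ :=
  fun i => if i ∈ I then 1 / (I.card : ℝ) else 0

/-- `D_i(p)`: the number of edges `ij` with `p_i > p_j`. -/
noncomputable def Dlab {n : ℕ} (μ : Fin (n + 1) → Fin (n + 1) → ℕ) (p : Fin (n + 1) → ℝ) (i : Fin n) : ℕ :=
  ∑ j ∈ Finset.univ.filter (fun j => p j < p i.castSucc), μ i.castSucc j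

/-- The monomial `m_I = ∏_{i ∈ [n]} x_i^{ε_I(i)}`. -/
noncomputable def mI {n : ℕ} (k : Type*) [Field k] (μ : Fin (n + 1) → Fin (n + 1) → ℕ)
    (I : Finset (Fin (n + 1))) : MvPolynomial (Fin n) k :=
  ∏ i : Fin n, MvPolynomial.X i ^ epsI μ I i.castSucc

/-- The monomial ideal `M_G = ⟨ m_I : ∅ ≠ I ⊆ [n] ⟩`. -/
noncomputable def MG {n : ℕ} (k : Type*) [Field k] (μ : Fin (n + 1) → Fin (n + 1) → ℕ) :
    Ideal (MvPolynomial (Fin n) k) :=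
  Ideal.span {f | ∃ I : Finset (Fin (n + 1)), I.Nonempty ∧ Fin.last n ∉ I ∧ f = mI k μ I}

/-! If `G[I]` and `G[V∖I]` are connected, every point of `C(e_I/|I|)` is constant on `I` and on
`V∖I`, vanishes at `n+1 ∈ V∖I`, and is normalised, so it equals `e_I/|I|`. Conversely, let `I` be
the set of vertices not joined to `n+1` by a path along which `p` is constant. If `I` met two
such `p`-classes `A` and `B`, then `p + t (e_A/|A| - e_B/|B|)` would lie in `C(p)` for small
`t > 0`. So `I` is a single class, which makes `G[I]` and `G[V∖I]` connected and
`p = e_I/|I|`. -/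

theorem Relation.ReflTransGen.apply_eq {α β : Type*} {r : α → α → Prop} {f : α → β} {a b : α}
    (hf : ∀ x y, r x y → f x = f y) (h : Relation.ReflTransGen r a b) : f a = f b := by
  simpa [Relation.reflTransGen_eq_self] using h.lift f hf

theorem exists_pos_forall_two_mul_lt_sub {ι : Type*} [Fintype ι] (f : ι → ℝ) :
    ∃ t > 0, ∀ i j, f i < f j → 2 * t < f j - f i := by
  classical
  set s := insert 1 ((univ.filter fun x : ι × ι => f x.1 < f x.2).image fun x => f x.2 - f x.1)
  have hs : s.Nonempty := insert_nonempty _ _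
  have hpos : 0 < s.min' hs := by
    rw [Finset.lt_min'_iff]
    simp only [s, mem_insert, mem_image, mem_filter, mem_univ, true_and]
    rintro _ (rfl | ⟨x, hx, rfl⟩) <;> linarith
  refine ⟨s.min' hs / 3, by positivity, fun i j hij => ?_⟩
  have := s.min'_le (f j - f i) (mem_insert_of_mem (mem_image.2 ⟨(i, j), by simpa using hij, rfl⟩))
  linarith

section

variable {n : ℕ} {μ : Fin (n + 1) → Fin (n + 1) → ℕ} {p q : Fin (n + 1) → ℝ}

theorem mem_U_iff : q ∈ U n ↔ q (Fin.last n) = 0 ∧ ∑ i, q i = 1 := by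
  rw [U, Set.mem_ofPred_eq, Fin.sum_univ_castSucc]
  constructor
  · rintro ⟨h0, h1⟩
    exact ⟨h0, by rw [h0, h1, add_zero]⟩
  · rintro ⟨h0, h1⟩
    exact ⟨h0, by rwa [h0, add_zero] at h1⟩

theorem add_smul_sub_mem_U {x y z : Fin (n + 1) → ℝ} (hx : x ∈ U n) (hy : y ∈ U n)
    (hz : z ∈ U n) (t : ℝ) : x + t • (y - z) ∈ U n := by
  rw [mem_U_iff] at *
  simp [Finset.sum_add_distrib, ← Finset.mul_sum, hx, hy, hz]

theorem qI_mem_U {I : Finset (Fin (n + 1))} (hI : I.Nonempty) (hlast : Fin.last n ∉ I) :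
    qI I ∈ U n := by
  rw [mem_U_iff]
  refine ⟨if_neg hlast, ?_⟩
  simp [qI, Finset.sum_ite_mem, hI.card_pos.ne']

theorem qI_apply_eq {I : Finset (Fin (n + 1))} {i j : Fin (n + 1)} (h : i ∈ I ↔ j ∈ I) :
    qI I i = qI I j := by
  simp only [qI, h]

theorem qI_mem_Icc (I : Finset (Fin (n + 1))) (i : Fin (n + 1)) : qI I i ∈ Set.Icc (0 : ℝ) 1 := by
  unfold qI
  split_ifs with hi
  · have : (1 : ℝ) ≤ I.card := by exact_mod_cast card_pos.2 ⟨i, hi⟩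
    exact ⟨by positivity, div_le_one_of_le₀ this (by positivity)⟩
  · simp

theorem eq_qI_of_forall {I : Finset (Fin (n + 1))} (hq : q ∈ U n) (hzero : ∀ i ∉ I, q i = 0)
    (hconst : ∀ i ∈ I, ∀ j ∈ I, q i = q j) : q = qI I := by
  have hsum : ∑ j ∈ I, q j = 1 := by
    rw [← (mem_U_iff.1 hq).2, Finset.sum_subset (subset_univ I) fun j _ hj => hzero j hj]
  funext i
  by_cases hi : i ∈ I
  · rw [Finset.sum_congr rfl fun j hj => hconst j hj i hi, sum_const, nsmul_eq_mul] at hsum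
    have : (0 : ℝ) < I.card := by exact_mod_cast card_pos.2 ⟨i, hi⟩
    rw [qI, if_pos hi, eq_div_iff this.ne']
    linarith
  · rw [qI, if_neg hi, hzero i hi]

theorem mem_openCell_of_abs_sub_le {t : ℝ} (hq : q ∈ U n)
    (hgap : ∀ i j, p i < p j → 2 * t < p j - p i) (hclose : ∀ i, |q i - p i| ≤ t)
    (hflat : ∀ i j, 1 ≤ μ i j → p i = p j → q i = q j) : q ∈ openCell μ p := by
  have hlt : ∀ i j, p i < p j → q i < q j := fun i j h => by
    have := hgap i j h
    linarith [abs_le.1 (hclose i), abs_le.1 (hclose j)]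
  refine ⟨hq, fun i j hμ => ?_⟩
  rcases lt_trichotomy (p i) (p j) with h | h | h
  · exact ⟨iff_of_true (hlt i j h) h, iff_of_false (hlt i j h).ne h.ne⟩
  · simp [h, hflat i j hμ h]
  · exact ⟨iff_of_false (hlt j i h).not_gt h.not_gt, iff_of_false (hlt j i h).ne' h.ne'⟩

theorem ConnectedOn.apply_eq {β : Type*} {S : Set (Fin (n + 1))} (hS : ConnectedOn μ S)
    {f : Fin (n + 1) → β} (hf : ∀ a ∈ S, ∀ b ∈ S, 1 ≤ μ a b → f a = f b) : ∀ i ∈ S, ∀ j ∈ S, f i = f j :=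
  fun i hi j hj => (hS i hi j hj).apply_eq fun a b h => hf a h.1 b h.2.1 h.2.2

theorem pEquiv.symm (hsym : ∀ i j, μ i j = μ j i) {i j : Fin (n + 1)} (h : pEquiv μ p i j) :
    pEquiv μ p j i :=
  Relation.ReflTransGen.mono (fun a b hab => ⟨hsym b a ▸ hab.1, hab.2.symm⟩)
    j i (Relation.ReflTransGen.swap j i h)

theorem pEquiv.apply_eq {i j : Fin (n + 1)} (h : pEquiv μ p i j) : p i = p j :=
  Relation.ReflTransGen.apply_eq (fun _ _ hab => hab.2) h

theorem pEquiv_iff_of_adj (hsym : ∀ i j, μ i j = μ j i) {i a b : Fin (n + 1)} (hμ : 1 ≤ μ a b)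
    (he : p a = p b) : pEquiv μ p i a ↔ pEquiv μ p i b :=
  ⟨fun h => h.tail ⟨hμ, he⟩, fun h => h.tail ⟨hsym a b ▸ hμ, he.symm⟩⟩

theorem connectedOn_of_pEquiv {S : Set (Fin (n + 1))}
    (hS : ∀ a b, a ∈ S → 1 ≤ μ a b → p a = p b → b ∈ S)
    (h : ∀ i ∈ S, ∀ j ∈ S, pEquiv μ p i j) : ConnectedOn μ S := by
  intro i hi j hj
  suffices ∀ k, pEquiv μ p i k →
      k ∈ S ∧ Relation.ReflTransGen (fun a b => a ∈ S ∧ b ∈ S ∧ 1 ≤ μ a b) i k from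
    (this j (h i hi j hj)).2
  intro k hk
  induction hk with
  | refl => exact ⟨hi, .refl⟩
  | tail _ step ih =>
    have hc := hS _ _ ih.1 step.1 step.2
    exact ⟨hc, ih.2.tail ⟨ih.1, hc, step.1⟩⟩

theorem openCell_ne_singleton_of_not_pEquiv (hsym : ∀ i j, μ i j = μ j i) (hp : p ∈ U n)
    {i j : Fin (n + 1)} (hij : ¬pEquiv μ p i j) (hi : ¬pEquiv μ p (Fin.last n) i)
    (hj : ¬pEquiv μ p (Fin.last n) j) : openCell μ p ≠ {p} := by
  classical
  set A := univ.filter (pEquiv μ p i)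
  set B := univ.filter (pEquiv μ p j)
  have hA : qI A ∈ U n :=
    qI_mem_U ⟨i, by simpa [A] using .refl⟩ (by simpa [A] using fun h => hi (h.symm hsym))
  have hB : qI B ∈ U n :=
    qI_mem_U ⟨j, by simpa [B] using .refl⟩ (by simpa [B] using fun h => hj (h.symm hsym))
  obtain ⟨t, ht, hgap⟩ := exists_pos_forall_two_mul_lt_sub p
  set q := p + t • (qI A - qI B)
  have hq : q ∈ openCell μ p := by
    refine mem_openCell_of_abs_sub_le (add_smul_sub_mem_U hp hA hB t) hgap (fun k => ?_)
      fun a b hμ he => ?_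
    · have hAk := qI_mem_Icc A k
      have hBk := qI_mem_Icc B k
      simp only [q, Pi.add_apply, Pi.smul_apply, Pi.sub_apply, smul_eq_mul, add_sub_cancel_left,
        abs_mul, abs_of_pos ht]
      exact mul_le_of_le_one_right ht.le (abs_sub_le_of_nonneg_of_le hAk.1 hAk.2 hBk.1 hBk.2)
    · have hAab : qI A a = qI A b := qI_apply_eq (by simpa [A] using pEquiv_iff_of_adj hsym hμ he)
      have hBab : qI B a = qI B b := qI_apply_eq (by simpa [B] using pEquiv_iff_of_adj hsym hμ he)
      simp [q, hAab, hBab, he]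
  have hqi : q i ≠ p i := by
    have hiA : i ∈ A := by simpa [A] using .refl
    have hiB : i ∉ B := by simpa [B] using fun h => hij (h.symm hsym)
    simp [q, qI, hiA, hiB, ht.ne', (card_pos.2 ⟨i, hiA⟩).ne']
  intro h
  rw [h] at hq
  exact hqi (congrFun hq i)

theorem exists_of_openCell_eq_singleton (hsym : ∀ i j, μ i j = μ j i) (hp : p ∈ U n)
    (hcell : openCell μ p = {p}) :
    ∃ I : Finset (Fin (n + 1)), I.Nonempty ∧ Fin.last n ∉ I ∧
      ConnectedOn μ (I : Set (Fin (n + 1))) ∧ ConnectedOn μ ((I : Set (Fin (n + 1)))ᶜ) ∧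
      p = qI I := by
  classical
  set I := univ.filter fun i => ¬pEquiv μ p (Fin.last n) i
  have hmemI : ∀ i, i ∈ I ↔ ¬pEquiv μ p (Fin.last n) i := by simp [I]
  have hzero : ∀ i ∉ I, p i = 0 := fun i hi => by
    rw [hmemI, not_not] at hi
    rw [← hi.apply_eq, hp.1]
  have hclass : ∀ i ∈ I, ∀ j ∈ I, pEquiv μ p i j := fun i hi j hj =>
    by_contra fun hij => openCell_ne_singleton_of_not_pEquiv hsym hp hij
      ((hmemI i).1 hi) ((hmemI j).1 hj) hcell
  have hpI : p = qI I := eq_qI_of_forall hp hzero fun i hi j hj => (hclass i hi j hj).apply_eq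
  refine ⟨I, ?_, by simpa [hmemI] using .refl, ?_, ?_, hpI⟩
  · rw [Finset.nonempty_iff_ne_empty]
    intro hI
    simpa [hpI, hI, qI] using (mem_U_iff.1 hp).2
  · refine connectedOn_of_pEquiv (fun a b ha hμ he => ?_) hclass
    simpa [hmemI, pEquiv_iff_of_adj hsym hμ he] using ha
  · refine connectedOn_of_pEquiv (p := p) (fun a b ha hμ he => ?_) fun i hi j hj => ?_
    · simpa [hmemI, pEquiv_iff_of_adj hsym hμ he] using ha
    · simp only [Set.mem_compl_iff, mem_coe, hmemI, not_not] at hi hj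
      exact (hi.symm hsym).trans hj

theorem openCell_qI_eq_singleton {I : Finset (Fin (n + 1))} (hp : qI I ∈ U n)
    (hlast : Fin.last n ∉ I) (hI : ConnectedOn μ (I : Set (Fin (n + 1))))
    (hIc : ConnectedOn μ ((I : Set (Fin (n + 1)))ᶜ)) : openCell μ (qI I) = {qI I} := by
  refine Set.eq_singleton_iff_unique_mem.2 ⟨⟨hp, fun _ _ _ => ⟨Iff.rfl, Iff.rfl⟩⟩, fun q hq => ?_⟩
  have hflat : ∀ a b, 1 ≤ μ a b → (a ∈ I ↔ b ∈ I) → q a = q b := fun a b hμ h =>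
    ((hq.2 a b hμ).2).2 (qI_apply_eq h)
  refine eq_qI_of_forall hq.1 (fun i hi => ?_) (hI.apply_eq fun a ha b hb hμ => hflat a b hμ ?_)
  · rw [hIc.apply_eq (fun a ha b hb hμ => hflat a b hμ (iff_of_false ha hb)) i hi _ hlast,
      hq.1.1]
  · exact iff_of_true ha hb

end

theorem stmt2_general {n : ℕ} (μ : Fin (n + 1) → Fin (n + 1) → ℕ)
    (hsym : ∀ i j, μ i j = μ j i)
    (p : Fin (n + 1) → ℝ) (hp : p ∈ U n) :
    openCell μ p = {p} ↔
      ∃ I : Finset (Fin (n + 1)), I.Nonempty ∧ Fin.last n ∉ I ∧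
        ConnectedOn μ (I : Set (Fin (n + 1))) ∧
        ConnectedOn μ ((I : Set (Fin (n + 1)))ᶜ) ∧ p = qI I := by
  refine ⟨exists_of_openCell_eq_singleton hsym hp, ?_⟩
  rintro ⟨I, -, hlast, hI, hIc, rfl⟩
  exact openCell_qI_eq_singleton hp hlast hI hIc

/-- `C(p) = {p}` iff `p = (1/|I|)·e_I` for some nonempty `I ⊆ [n]` with
both `G[I]` and `G[V∖I]` connected. -/
theorem stmt2 {n : ℕ} (hn : 1 ≤ n) (μ : Fin (n + 1) → Fin (n + 1) → ℕ)
    (hsym : ∀ i j, μ i j = μ j i) (hloop : ∀ i, μ i i = 0)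
    (hconn : ConnectedOn μ Set.univ)
    (p : Fin (n + 1) → ℝ) (hp : p ∈ U n) :
    openCell μ p = {p} ↔
      ∃ I : Finset (Fin (n + 1)), I.Nonempty ∧ Fin.last n ∉ I ∧
        ConnectedOn μ (I : Set (Fin (n + 1))) ∧
        ConnectedOn μ ((I : Set (Fin (n + 1)))ᶜ) ∧ p = qI I :=
  stmt2_general μ hsym p hp
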